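/- arXiv:2412.01049 — 3 statements merged into one kernel-verified Lean document; each statement's English description precedes it below -/
import Mathlib

section
/- Let X be an ℕ² shift over a finite alphabet A and let a ∈ A. For any integers k₁, k₂ > 1 there exists a block u ∈ B_{k₁,k₂}(X) such that for every 1 ≤ j ≤ k₁ the restriction of u to [1,j]×[1,k₂] contains at least j·k₂·Fr_a(X) occurrences of the symbol a, i.e., ‖u|_{[1,j]×[1,k₂]}‖_a ≥ j·k₂·Fr_a(X). -/
open Filter

/-- `X` is an `ℕ²` shift over the alphabet `A`: a closed subset of `A ^ (ℕ×ℕ)`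
invariant under the two one-sided coordinate shift maps. -/
def IsN2Shift {A : Type*} [TopologicalSpace A] (X : Set (ℕ × ℕ → A)) : Prop :=
  IsClosed X ∧ (∀ x ∈ X, (fun p : ℕ × ℕ => x (p.1 + 1, p.2)) ∈ X) ∧
    (∀ x ∈ X, (fun p : ℕ × ℕ => x (p.1, p.2 + 1)) ∈ X)

/-- `‖x|_{[0,k₁)×[0,k₂)}‖_a`: the number of occurrences of the symbol `a`
in the restriction of `x` to the box `[0,k₁) × [0,k₂)`. -/
def occCount {A : Type*} [DecidableEq A] (x : ℕ × ℕ → A) (a : A) (k₁ k₂ : ℕ) : ℕ :=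
  ((Finset.range k₁ ×ˢ Finset.range k₂).filter fun p => x p = a).card

/-- `M^a_{k₁,k₂}(X)`: the maximal number of occurrences of `a` in a `k₁ × k₂` block of `X`. -/
noncomputable def maxOcc {A : Type*} [DecidableEq A] (X : Set (ℕ × ℕ → A)) (a : A)
    (k₁ k₂ : ℕ) : ℕ :=
  sSup {m : ℕ | ∃ x ∈ X, m = occCount x a k₁ k₂}

/-- `Fr_a(X) = inf_{k₁,k₂ ≥ 1} M^a_{k₁,k₂}(X)/(k₁·k₂)`
(by subadditivity this infimum is also the limit as `k₁,k₂ → ∞`). -/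
noncomputable def freqSup {A : Type*} [DecidableEq A] (X : Set (ℕ × ℕ → A)) (a : A) : ℝ :=
  sInf {r : ℝ | ∃ k₁ k₂ : ℕ, 1 ≤ k₁ ∧ 1 ≤ k₂ ∧ r = (maxOcc X a k₁ k₂ : ℝ) / (k₁ * k₂)}

lemma occCount_le {A : Type*} [DecidableEq A] (x : ℕ × ℕ → A) (a : A) (m n : ℕ) :
    occCount x a m n ≤ m * n := by
  classical
  calc occCount x a m n ≤ (Finset.range m ×ˢ Finset.range n).card := Finset.card_filter_le _ _
  _ = m * n := by simp [Finset.card_product]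

lemma occCount_eq_sum {A : Type*} [DecidableEq A] (x : ℕ × ℕ → A) (a : A) (m n : ℕ) :
    occCount x a m n
      = ∑ i ∈ Finset.range m, ((Finset.range n).filter fun q => x (i, q) = a).card := by
  classical
  unfold occCount
  rw [Finset.card_filter, Finset.sum_product]
  refine Finset.sum_congr rfl fun i _ => ?_
  rw [Finset.card_filter]

lemma occCount_add {A : Type*} [DecidableEq A] (x : ℕ × ℕ → A) (a : A) (m j n : ℕ) :
    occCount x a (m + j) n
      = occCount x a m n + occCount (fun p => x (p.1 + m, p.2)) a j n := by
  classical
  simp only [occCount_eq_sum]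
  rw [Finset.sum_range_add]
  congr 1
  exact Finset.sum_congr rfl fun i _ => by rw [add_comm m i]

/-- For any `k₁, k₂ > 1` there is a block `u ∈ B_{k₁,k₂}(X)`
(a restriction of a point `x ∈ X`) such that for every `1 ≤ j ≤ k₁`,
`‖u|_{[0,j)×[0,k₂)}‖_a ≥ j·k₂·Fr_a(X)`. -/
theorem exists_block_with_many_occurrences
    {A : Type*} [Fintype A] [DecidableEq A] [TopologicalSpace A] [DiscreteTopology A]
    (hA : 2 ≤ Fintype.card A)
    (X : Set (ℕ × ℕ → A)) (hX : IsN2Shift X) (hne : X.Nonempty) (a : A)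
    (k₁ k₂ : ℕ) (hk₁ : 1 < k₁) (hk₂ : 1 < k₂) :
    ∃ x ∈ X, ∀ j : ℕ, 1 ≤ j → j ≤ k₁ →
      (j : ℝ) * k₂ * freqSup X a ≤ (occCount x a j k₂ : ℝ) := by
  classical
  set Fr := freqSup X a with hFrdef
  have hFrdef' : Fr = sInf {r : ℝ | ∃ m n : ℕ, 1 ≤ m ∧ 1 ≤ n ∧
      r = (maxOcc X a m n : ℝ) / ((m : ℝ) * (n : ℝ))} := rfl
  have hS_ne : ({r : ℝ | ∃ m n : ℕ, 1 ≤ m ∧ 1 ≤ n ∧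
      r = (maxOcc X a m n : ℝ) / ((m : ℝ) * (n : ℝ))}).Nonempty :=
    ⟨(maxOcc X a 1 1 : ℝ) / ((1 : ℝ) * (1 : ℝ)), 1, 1, le_refl 1, le_refl 1, by norm_num⟩
  have hS_bdd : BddBelow {r : ℝ | ∃ m n : ℕ, 1 ≤ m ∧ 1 ≤ n ∧
      r = (maxOcc X a m n : ℝ) / ((m : ℝ) * (n : ℝ))} := by
    refine ⟨0, ?_⟩
    rintro r ⟨m, n, hm, hn, rfl⟩
    positivity
  have hFr0 : 0 ≤ Fr := by
    rw [hFrdef']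
    refine le_csInf hS_ne ?_
    rintro r ⟨m, n, hm, hn, rfl⟩
    positivity
  have hFr_le : ∀ m n : ℕ, 1 ≤ m → 1 ≤ n → Fr * ((m : ℝ) * (n : ℝ)) ≤ (maxOcc X a m n : ℝ) := by
    intro m n hm hn
    have h := csInf_le hS_bdd (Set.mem_setOf.mpr ⟨m, n, hm, hn, rfl⟩)
    rw [← hFrdef'] at h
    have hpos : (0 : ℝ) < (m : ℝ) * (n : ℝ) := by
      have : (1 : ℝ) ≤ (m : ℝ) := by exact_mod_cast hm
      have : (1 : ℝ) ≤ (n : ℝ) := by exact_mod_cast hn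
      nlinarith
    exact (le_div_iff₀ hpos).mp h
  have hmax : ∀ m n : ℕ, ∃ z ∈ X, maxOcc X a m n = occCount z a m n := by
    intro m n
    have hmem : maxOcc X a m n ∈ {t : ℕ | ∃ z ∈ X, t = occCount z a m n} := by
      apply Nat.sSup_mem
      · obtain ⟨z, hz⟩ := hne
        exact ⟨occCount z a m n, z, hz, rfl⟩
      · refine ⟨m * n, ?_⟩
        rintro t ⟨z, hz, rfl⟩
        exact occCount_le z a m n
    exact hmem
  have hshift : ∀ (m : ℕ) (z : ℕ × ℕ → A), z ∈ X →
      (fun p : ℕ × ℕ => z (p.1 + m, p.2)) ∈ X := by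
    intro m
    induction m with
    | zero => intro z hz; simpa using hz
    | succ m ih =>
      intro z hz
      have h2 := hX.2.1 _ (ih z hz)
      have heq : (fun p : ℕ × ℕ => z (p.1 + (m + 1), p.2))
          = (fun p : ℕ × ℕ => (fun q : ℕ × ℕ => z (q.1 + m, q.2)) (p.1 + 1, p.2)) := by
        funext p
        have : p.1 + (m + 1) = p.1 + 1 + m := by omega
        simp only [this]
      rw [heq]
      exact h2
  -- the quantitative decrement
  have hIcc_ne : (Finset.Icc 1 k₁).Nonempty := ⟨1, by simp; omega⟩
  set δ : ℝ := (Finset.Icc 1 k₁).inf' hIcc_ne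
      (fun j => 1 + (j : ℝ) * k₂ * Fr - ⌈(j : ℝ) * k₂ * Fr⌉) with hδdef
  have hδpos : 0 < δ := by
    rw [hδdef, Finset.lt_inf'_iff]
    intro j _
    have := Int.ceil_lt_add_one ((j : ℝ) * k₂ * Fr)
    linarith
  have hδle : ∀ j ∈ Finset.Icc 1 k₁,
      δ ≤ 1 + (j : ℝ) * k₂ * Fr - ⌈(j : ℝ) * k₂ * Fr⌉ :=
    fun j hj => Finset.inf'_le _ hj
  set C : ℕ := Nat.ceil ((k₁ : ℝ) ^ 2 * k₂ / δ) with hC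
  set N : ℕ := 2 * k₁ + C + 1 with hN
  obtain ⟨x, hxX, hxocc⟩ := hmax N k₂
  set g : ℕ → ℝ := fun i => (occCount x a i k₂ : ℝ) - (i : ℝ) * k₂ * Fr with hg
  have hg0 : g 0 = 0 := by simp [hg, occCount]
  have hstep : ∀ i j : ℕ,
      (occCount (fun p : ℕ × ℕ => x (p.1 + i, p.2)) a j k₂ : ℝ)
        = g (i + j) - g i + (j : ℝ) * k₂ * Fr := by
    intro i j
    have h : (occCount x a (i + j) k₂ : ℝ)
        = (occCount x a i k₂ : ℝ)
          + (occCount (fun p : ℕ × ℕ => x (p.1 + i, p.2)) a j k₂ : ℝ) := by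
      exact_mod_cast occCount_add x a i j k₂
    simp only [hg]
    push_cast
    linarith
  have hgN : 0 ≤ g N := by
    have h1 := hFr_le N k₂ (by omega) (by omega)
    rw [hxocc] at h1
    simp only [hg]
    nlinarith [h1]
  have hgood : ∃ i₀, i₀ + k₁ ≤ N ∧ ∀ j, 1 ≤ j → j ≤ k₁ → g i₀ ≤ g (i₀ + j) := by
    by_contra hbad
    push_neg at hbad
    have hdesc : ∀ t : ℕ, ∃ i, t ≤ i ∧ i ≤ t * k₁ ∧ i + k₁ ≤ N ∧ g i ≤ -(t : ℝ) * δ := by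
      intro t
      induction t with
      | zero =>
        refine ⟨0, le_refl _, by simp, by omega, ?_⟩
        simp [hg0]
      | succ t ih =>
        obtain ⟨i, hti, hik, hiN, hgi⟩ := ih
        obtain ⟨j, hj1, hjk, hlt⟩ := hbad i hiN
        -- decrement
        have hdec : g (i + j) ≤ g i - δ := by
          have hΔ := hstep i j
          set Δ : ℕ := occCount (fun p : ℕ × ℕ => x (p.1 + i, p.2)) a j k₂ with hΔdef
          have hΔlt : (Δ : ℝ) < (j : ℝ) * k₂ * Fr := by linarith
          have hint : (Δ : ℤ) < ⌈(j : ℝ) * k₂ * Fr⌉ := Int.lt_ceil.mpr (by exact_mod_cast hΔlt)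
          have hΔle : (Δ : ℝ) ≤ (⌈(j : ℝ) * k₂ * Fr⌉ : ℝ) - 1 := by
            have : (Δ : ℤ) ≤ ⌈(j : ℝ) * k₂ * Fr⌉ - 1 := by omega
            exact_mod_cast this
          have hδj := hδle j (Finset.mem_Icc.mpr ⟨hj1, hjk⟩)
          linarith
        by_cases hc : i + j + k₁ ≤ N
        · refine ⟨i + j, by omega, by
            calc i + j ≤ t * k₁ + k₁ := by omega
            _ = (t + 1) * k₁ := by ring, hc, ?_⟩
          have hcast : ((t + 1 : ℕ) : ℝ) = (t : ℝ) + 1 := by push_cast; ring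
          rw [hcast]
          linarith
        · exfalso
          have hijN : i + j ≤ N := by omega
          set m : ℕ := N - (i + j) with hm
          have hmlt : m < k₁ := by omega
          have hNm : i + j + m = N := by omega
          have hstep2 := hstep (i + j) m
          rw [hNm] at hstep2
          have hΔ'le : (occCount (fun p : ℕ × ℕ => x (p.1 + (i + j), p.2)) a m k₂ : ℝ)
              ≤ (m : ℝ) * k₂ := by exact_mod_cast occCount_le _ a m k₂
          have hmk : (m : ℝ) ≤ (k₁ : ℝ) := by exact_mod_cast hmlt.le
          have hk₂0 : (0 : ℝ) ≤ (k₂ : ℝ) := by positivity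
          have hfr0 : (0 : ℝ) ≤ (m : ℝ) * k₂ * Fr := by positivity
          have hgNle : g N - g (i + j) ≤ (k₁ : ℝ) * k₂ := by
            have h2 : (m : ℝ) * k₂ ≤ (k₁ : ℝ) * k₂ := mul_le_mul_of_nonneg_right hmk hk₂0
            linarith
          -- (t+1) * δ ≤ k₁ * k₂
          have hA : ((t : ℝ) + 1) * δ ≤ (k₁ : ℝ) * k₂ := by
            have hexp0 : ((t : ℝ) + 1) * δ = (t : ℝ) * δ + δ := by ring
            have hgi' : g i ≤ -(t : ℝ) * δ := hgi
            linarith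
          -- lower bound on t
          have hiC : C + 2 ≤ i := by omega
          have hti' : (C : ℝ) + 2 ≤ (t : ℝ) * k₁ := by
            have : C + 2 ≤ t * k₁ := le_trans hiC hik
            exact_mod_cast this
          have hCge : (k₁ : ℝ) ^ 2 * k₂ / δ ≤ (C : ℝ) := Nat.le_ceil _
          have hB : (k₁ : ℝ) ^ 2 * k₂ < (t : ℝ) * k₁ * δ := by
            have h3 : (k₁ : ℝ) ^ 2 * k₂ / δ < (t : ℝ) * k₁ := by linarith
            calc (k₁ : ℝ) ^ 2 * k₂ = ((k₁ : ℝ) ^ 2 * k₂ / δ) * δ := by field_simp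
            _ < (t : ℝ) * k₁ * δ := mul_lt_mul_of_pos_right h3 hδpos
          have hk₁pos : (0 : ℝ) < (k₁ : ℝ) := by
            have : 0 < k₁ := by omega
            exact_mod_cast this
          have hA' : ((t : ℝ) + 1) * δ * k₁ ≤ (k₁ : ℝ) * k₂ * k₁ :=
            mul_le_mul_of_nonneg_right hA hk₁pos.le
          have hexp1 : ((t : ℝ) + 1) * δ * k₁ = (t : ℝ) * k₁ * δ + δ * k₁ := by ring
          have hexp2 : (k₁ : ℝ) * k₂ * k₁ = (k₁ : ℝ) ^ 2 * k₂ := by ring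
          have hdk := mul_pos hδpos hk₁pos
          linarith
    obtain ⟨i, hti, hik, hiN, _⟩ := hdesc N
    omega
  obtain ⟨i₀, hi₀N, hi₀good⟩ := hgood
  refine ⟨fun p : ℕ × ℕ => x (p.1 + i₀, p.2), hshift i₀ x hxX, ?_⟩
  intro j hj1 hjk
  have h := hstep i₀ j
  have hge := hi₀good j hj1 hjk
  rw [h]
  linarith
end

section
/- Let T be an expandable tree (γ_T > 1). Then there exists a tree-shift 𝒯 ⊆ {0,1}^T which has positive entropy h(𝒯) > 0 but contains no independence set S ⊆ T whose density d(S) = lim_{n→∞} |S ∩ Δ_n|/|Δ_n| exists and is positive. -/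
open Filter

/-- A (rooted, locally finite) tree realized as a set of finite words over the
`d` generators: it contains the root (the empty word) and is closed under prefixes. -/
def IsTree {d : ℕ} (T : Set (List (Fin d))) : Prop :=
  ([] : List (Fin d)) ∈ T ∧ ∀ w ∈ T, ∀ u : List (Fin d), u <+: w → u ∈ T

/-- `T_n`: the set of vertices of `T` at distance `n` from the root. -/
def level {d : ℕ} (T : Set (List (Fin d))) (n : ℕ) : Set (List (Fin d)) :=
  {w ∈ T | w.length = n}

/-- `Δ_n = ∪_{i=0}^n T_i`: the set of vertices of `T` at distance at most `n`. -/
def ball {d : ℕ} (T : Set (List (Fin d))) (n : ℕ) : Set (List (Fin d)) :=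
  {w ∈ T | w.length ≤ n}

/-- The statement that the expanding number `γ_T = lim_n |T_{n+1}|/|T_n|` exists
and equals `γ`. -/
def HasExpandingNumber {d : ℕ} (T : Set (List (Fin d))) (γ : ℝ) : Prop :=
  Tendsto (fun n : ℕ => ((level T (n + 1)).ncard : ℝ) / ((level T n).ncard : ℝ)) atTop (nhds γ)

/-- `|P(Δ_n, 𝒯)|`: the number of restrictions of labeled trees of `𝒯` to `Δ_n`. -/
noncomputable def ballBlockCount {d : ℕ} {A : Type*} (T : Set (List (Fin d)))
    (𝒯 : Set (List (Fin d) → A)) (n : ℕ) : ℕ :=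
  Set.ncard ((fun t (w : ball T n) => t (w : List (Fin d))) '' 𝒯)

/-- The entropy of a tree-shift, `h(𝒯) = limsup_n log |P(Δ_n,𝒯)| / |Δ_n|`. -/
noncomputable def treeEntropy {d : ℕ} {A : Type*} (T : Set (List (Fin d)))
    (𝒯 : Set (List (Fin d) → A)) : ℝ :=
  limsup (fun n : ℕ => Real.log (ballBlockCount T 𝒯 n) / ((ball T n).ncard : ℝ)) atTop

/-- `S` is an independence set for `𝒯`: every assignment of symbols on `S`
extends to an element of `𝒯`. -/
def IsIndepSet {I A : Type*} (𝒯 : Set (I → A)) (S : Set I) : Prop :=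
  ∀ u : I → A, ∃ t ∈ 𝒯, ∀ w ∈ S, t w = u w

/-- `𝒯` is a tree-shift on `T`: the set of labelings of `T` avoiding every pattern
from some set `F` of forbidden finite patterns (a pattern is a finitely supported
partial labeling; it appears in `t` at a vertex `g ∈ T` if every cell of the pattern,
translated to sit below `g`, lies in `T` and carries the prescribed label). -/
def IsTreeShift {d : ℕ} {A : Type*} (T : Set (List (Fin d)))
    (𝒯 : Set (List (Fin d) → A)) : Prop :=
  ∃ F : Set (List (Fin d) → Option A),
    (∀ p ∈ F, {w | p w ≠ none}.Finite) ∧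
    𝒯 = {t | ∀ p ∈ F, ∀ g ∈ T,
          ¬ ∀ w : List (Fin d), ∀ a : A, p w = some a → g ++ w ∈ T ∧ t (g ++ w) = a}

/-- The density `d(S) = lim_n |S ∩ Δ_n|/|Δ_n|` of `S ⊆ T` exists and is positive. -/
def HasPosDensity {d : ℕ} (T : Set (List (Fin d))) (S : Set (List (Fin d))) : Prop :=
  ∃ δ : ℝ, 0 < δ ∧
    Tendsto (fun n : ℕ => ((S ∩ ball T n).ncard : ℝ) / ((ball T n).ncard : ℝ)) atTop (nhds δ)

/-! The witness is the tree-shift `trueOnOneLevel T` of labelings whose `true`s all lie on one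
level of `T`, cut out by the forbidden patterns "`true` at two vertices of different depths".
Every level `T_n` is an independence set, so `|P(Δ_n)| ≥ 2^|T_n|`; since `γ_T > 1`, the ratio
`|Δ_n| / |T_n|` stays bounded, which makes the entropy positive. Conversely, extending the
all-`true` assignment shows that an independence set lies on a single level, hence is finite,
while `|Δ_n| → ∞` forces a finite set to have density zero. -/

open Topology

section

variable {d : ℕ} {T : Set (List (Fin d))}

theorem level_finite (T : Set (List (Fin d))) (n : ℕ) : (level T n).Finite :=
  (List.finite_length_eq (Fin d) n).subset fun _ hw => hw.2

theorem ball_finite (T : Set (List (Fin d))) (n : ℕ) : (ball T n).Finite :=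
  (List.finite_length_le (Fin d) n).subset fun _ hw => hw.2

theorem level_subset_ball (T : Set (List (Fin d))) (n : ℕ) : level T n ⊆ ball T n :=
  fun _ hw => ⟨hw.1, hw.2.le⟩

theorem ball_succ (T : Set (List (Fin d))) (n : ℕ) :
    ball T (n + 1) = ball T n ∪ level T (n + 1) := by
  ext w
  exact (and_congr_right fun _ => Nat.le_succ_iff).trans and_or_left

theorem ncard_ball_eq_sum (T : Set (List (Fin d))) (n : ℕ) :
    (ball T n).ncard = ∑ k ∈ Finset.range (n + 1), (level T k).ncard := by
  induction n with
  | zero => congr 1; ext w; simp [ball, level]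
  | succ n ih =>
    have hdisj : Disjoint (ball T n) (level T (n + 1)) :=
      Set.disjoint_left.2 fun _ hb hl => by have := hb.2; have := hl.2; omega
    rw [Finset.sum_range_succ, ← ih, ball_succ,
      Set.ncard_union_eq hdisj (ball_finite T n) (level_finite T (n + 1))]

theorem IsTree.level_nonempty_of_le (hT : IsTree T) {m n : ℕ} (hmn : m ≤ n)
    (h : (level T n).Nonempty) : (level T m).Nonempty := by
  obtain ⟨w, hwT, hw⟩ := h
  exact ⟨w.take m, hT.2 w hwT _ (List.take_prefix m w), by simp [hw, hmn]⟩

/-- Once a level is empty, all later ones are, and the ratios `|T_{n+1}| / |T_n|` are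
eventually `0 / 0 = 0`. -/
theorem HasExpandingNumber.level_nonempty {γ : ℝ} (hT : IsTree T) (hγ : HasExpandingNumber T γ)
    (hγ0 : γ ≠ 0) (n : ℕ) : (level T n).Nonempty := by
  by_contra hn
  have hempty : ∀ m ≥ n, level T m = ∅ := fun m hm =>
    Set.not_nonempty_iff_eq_empty.1 fun h => hn (hT.level_nonempty_of_le hm h)
  refine hγ0 (tendsto_nhds_unique hγ (tendsto_const_nhds.congr' ?_))
  filter_upwards [eventually_ge_atTop n] with m hm
  simp [hempty m hm, hempty (m + 1) (by omega)]

theorem tendsto_ncard_ball_atTop (hlev : ∀ n, (level T n).Nonempty) :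
    Tendsto (fun n => ((ball T n).ncard : ℝ)) atTop atTop := by
  refine tendsto_atTop_mono (fun n => ?_) tendsto_natCast_atTop_atTop
  have : n + 1 ≤ (ball T n).ncard := by
    have := Finset.card_nsmul_le_sum (Finset.range (n + 1)) (fun k => (level T k).ncard) 1
      fun k _ => (hlev k).ncard_pos (level_finite T k)
    rwa [Finset.card_range, smul_eq_mul, mul_one, ← ncard_ball_eq_sum] at this
  exact_mod_cast (Nat.le_succ n).trans this

/-- If eventually `l (n+1) ≥ ρ l n` with `ρ > 1`, the bound `∑_{k ≤ n} l k ≤ C l n` propagates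
as soon as `1 + C / ρ ≤ C`, i.e. `C ≥ ρ / (ρ - 1)`. -/
theorem exists_sum_range_le_mul_of_tendsto_ratio {l : ℕ → ℝ} (hl : ∀ n, 0 < l n) {γ : ℝ}
    (hγ : 1 < γ) (h : Tendsto (fun n => l (n + 1) / l n) atTop (𝓝 γ)) :
    ∃ C, 0 < C ∧ ∀ᶠ n in atTop, ∑ k ∈ Finset.range (n + 1), l k ≤ C * l n := by
  obtain ⟨ρ, hρ1, hργ⟩ := exists_between hγ
  obtain ⟨N, hN⟩ := eventually_atTop.1 (h.eventually (lt_mem_nhds hργ))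
  set C := max ((∑ k ∈ Finset.range (N + 1), l k) / l N) (ρ / (ρ - 1))
  have hCρ : ρ ≤ C * (ρ - 1) := (div_le_iff₀ (by linarith)).1 (le_max_right _ _)
  have hC : 0 < C := lt_max_of_lt_right (div_pos (by linarith) (by linarith))
  refine ⟨C, hC, eventually_atTop.2 ⟨N, fun n hn => ?_⟩⟩
  induction n, hn using Nat.le_induction with
  | base => exact (div_le_iff₀ (hl N)).1 (le_max_left _ _)
  | succ n hn ih =>
    have hgrow : ρ * l n ≤ l (n + 1) := ((lt_div_iff₀ (hl n)).1 (hN n hn)).le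
    rw [Finset.sum_range_succ]
    nlinarith [mul_le_mul_of_nonneg_left hgrow hC.le, hl (n + 1)]

theorem HasExpandingNumber.exists_ncard_ball_le_mul {γ : ℝ} (hT : IsTree T)
    (hγ : HasExpandingNumber T γ) (hγ1 : 1 < γ) :
    ∃ C, 0 < C ∧ ∀ᶠ n in atTop, ((ball T n).ncard : ℝ) ≤ C * (level T n).ncard := by
  have hpos : ∀ n, (0 : ℝ) < (level T n).ncard := fun n => by
    exact_mod_cast (hγ.level_nonempty hT (by linarith) n).ncard_pos (level_finite T n)
  simpa only [ncard_ball_eq_sum, Nat.cast_sum] using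
    exists_sum_range_le_mul_of_tendsto_ratio hpos hγ1 hγ

variable {A : Type*} [Finite A] {𝒯 : Set (List (Fin d) → A)}

theorem ballBlockCount_le (T : Set (List (Fin d))) (𝒯 : Set (List (Fin d) → A)) (n : ℕ) :
    ballBlockCount T 𝒯 n ≤ Nat.card A ^ (ball T n).ncard := by
  have := (ball_finite T n).to_subtype
  calc ballBlockCount T 𝒯 n ≤ Nat.card (ball T n → A) := Set.ncard_le_card _
    _ = Nat.card A ^ (ball T n).ncard := by rw [Nat.card_fun, Nat.card_coe_set_eq]

theorem log_ballBlockCount_div_le (T : Set (List (Fin d))) (𝒯 : Set (List (Fin d) → A))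
    (n : ℕ) : Real.log (ballBlockCount T 𝒯 n) / (ball T n).ncard ≤ Real.log (Nat.card A) := by
  refine div_le_of_le_mul₀ (Nat.cast_nonneg _) (Real.log_natCast_nonneg _) ?_
  rcases (ballBlockCount T 𝒯 n).eq_zero_or_pos with h | h
  · simp only [h, Nat.cast_zero, Real.log_zero]
    exact mul_nonneg (Real.log_natCast_nonneg _) (Nat.cast_nonneg _)
  · calc Real.log (ballBlockCount T 𝒯 n)
        ≤ Real.log ((Nat.card A ^ (ball T n).ncard : ℕ) : ℝ) :=
          Real.log_le_log (by exact_mod_cast h) (by exact_mod_cast ballBlockCount_le T 𝒯 n)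
      _ = Real.log (Nat.card A) * (ball T n).ncard := by
          rw [Nat.cast_pow, Real.log_pow, mul_comm]

theorem IsIndepSet.pow_ncard_le_ballBlockCount [Nonempty A] {S : Set (List (Fin d))} {n : ℕ}
    (hS : IsIndepSet 𝒯 S) (hSn : S ⊆ ball T n) :
    Nat.card A ^ S.ncard ≤ ballBlockCount T 𝒯 n := by
  have := (ball_finite T n).to_subtype
  have := ((ball_finite T n).subset hSn).to_subtype
  let restrict : ((fun t (w : ball T n) => t w) '' 𝒯) → (S → A) :=
    fun b w => b.1 ⟨w, hSn w.2⟩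
  have hrestrict : Function.Surjective restrict := fun u => by
    obtain ⟨t, ht, htu⟩ := hS (Function.extend Subtype.val u fun _ => Classical.arbitrary A)
    refine ⟨⟨_, t, ht, rfl⟩, funext fun w => ?_⟩
    simpa [restrict, Subtype.val_injective.extend_apply] using htu w w.2
  calc Nat.card A ^ S.ncard = Nat.card (S → A) := by rw [Nat.card_fun, Nat.card_coe_set_eq]
    _ ≤ ballBlockCount T 𝒯 n := Nat.card_le_card_of_surjective restrict hrestrict

theorem le_treeEntropy_of_isIndepSet_level [Nonempty A] (hind : ∀ n, IsIndepSet 𝒯 (level T n))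
    (hlev : ∀ n, (level T n).Nonempty) {C : ℝ} (hC : 0 < C)
    (hball : ∀ᶠ n in atTop, ((ball T n).ncard : ℝ) ≤ C * (level T n).ncard) :
    Real.log (Nat.card A) / C ≤ treeEntropy T 𝒯 := by
  refine le_limsup_of_frequently_le (hball.mono fun n hn => ?_).frequently
    (isBoundedUnder_of ⟨_, log_ballBlockCount_div_le T 𝒯⟩)
  have hl : (0 : ℝ) < (level T n).ncard := by
    exact_mod_cast (hlev n).ncard_pos (level_finite T n)
  have hb : (0 : ℝ) < (ball T n).ncard := hl.trans_le <| by
    exact_mod_cast Set.ncard_le_ncard (level_subset_ball T n) (ball_finite T n)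
  have hlog := Real.log_natCast_nonneg (Nat.card A)
  have hcount : ((Nat.card A ^ (level T n).ncard : ℕ) : ℝ) ≤ ballBlockCount T 𝒯 n := by
    exact_mod_cast (hind n).pow_ncard_le_ballBlockCount (level_subset_ball T n)
  calc Real.log (Nat.card A) / C
      = (level T n).ncard * Real.log (Nat.card A) / (C * (level T n).ncard) := by
        field_simp
    _ ≤ (level T n).ncard * Real.log (Nat.card A) / (ball T n).ncard :=
        div_le_div_of_nonneg_left (by positivity) hb hn
    _ ≤ Real.log (ballBlockCount T 𝒯 n) / (ball T n).ncard := by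
        rw [← Real.log_pow, ← Nat.cast_pow]
        gcongr
        exact_mod_cast pow_pos Nat.card_pos _

theorem HasPosDensity.infinite {S : Set (List (Fin d))}
    (hball : Tendsto (fun n => ((ball T n).ncard : ℝ)) atTop atTop) (hS : HasPosDensity T S) :
    S.Infinite := by
  intro hfin
  obtain ⟨δ, hδ, hlim⟩ := hS
  have hzero : Tendsto (fun n => ((S ∩ ball T n).ncard : ℝ) / (ball T n).ncard) atTop (𝓝 0) :=
    squeeze_zero (fun n => by positivity)
      (fun n => div_le_div_of_nonneg_right
        (Nat.cast_le.2 (Set.ncard_le_ncard Set.inter_subset_left hfin)) (Nat.cast_nonneg _))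
      (tendsto_const_nhds.div_atTop hball)
  exact hδ.ne' (tendsto_nhds_unique hlim hzero)

end

section

variable {d : ℕ} {T : Set (List (Fin d))}

def trueOnOneLevel (T : Set (List (Fin d))) : Set (List (Fin d) → Bool) :=
  {t | ∀ x ∈ T, ∀ y ∈ T, t x = true → t y = true → x.length = y.length}

def trueAtPair (u v : List (Fin d)) : List (Fin d) → Option Bool :=
  fun w => if w = u ∨ w = v then some true else none

/-- Two `true`s at different depths form a forbidden pattern occurring at the root. -/
theorem isTreeShift_trueOnOneLevel (hroot : [] ∈ T) : IsTreeShift T (trueOnOneLevel T) := by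
  refine ⟨{p | ∃ u v : List (Fin d), u.length ≠ v.length ∧ p = trueAtPair u v}, ?_, ?_⟩
  · rintro _ ⟨u, v, -, rfl⟩
    refine (Set.toFinite {u, v}).subset fun w hw => ?_
    by_contra h
    simp_all [trueAtPair]
  · ext t
    simp only [trueOnOneLevel, Set.mem_ofPred_eq]
    constructor
    · rintro ht _ ⟨u, v, huv, rfl⟩ g _ hpat
      have hu := hpat u true (by simp [trueAtPair])
      have hv := hpat v true (by simp [trueAtPair])
      exact huv (by simpa using ht _ hu.1 _ hv.1 hu.2 hv.2)
    · intro ht x hx y hy htx hty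
      by_contra hxy
      refine ht _ ⟨x, y, hxy, rfl⟩ [] hroot fun w a hw => ?_
      simp only [trueAtPair] at hw
      split_ifs at hw with hw'
      · obtain rfl := Option.some_inj.1 hw
        rcases hw' with rfl | rfl <;> simp_all

theorem isIndepSet_level_trueOnOneLevel (n : ℕ) : IsIndepSet (trueOnOneLevel T) (level T n) :=
  fun u => ⟨fun w => decide (w.length = n) && u w,
    fun x _ y _ hx hy => by simp only [Bool.and_eq_true, decide_eq_true_eq] at hx hy; omega,
    fun w hw => by simp [hw.2]⟩

theorem IsIndepSet.finite_of_trueOnOneLevel {S : Set (List (Fin d))} (hST : S ⊆ T)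
    (hS : IsIndepSet (trueOnOneLevel T) S) : S.Finite := by
  obtain ⟨t, ht, htS⟩ := hS fun _ => true
  rcases S.eq_empty_or_nonempty with rfl | ⟨x, hx⟩
  · exact Set.finite_empty
  · exact (List.finite_length_eq (Fin d) x.length).subset fun y hy =>
      ht y (hST hy) x (hST hx) (htS y hy) (htS x hx)

end

/-- On any expandable tree (`γ_T > 1`) there is a tree-shift
`𝒯 ⊆ {0,1}^T` with positive entropy which has no independence set `S ⊆ T`
of positive density. -/
theorem exists_treeShift_pos_entropy_without_indep_posDensity
    (d : ℕ) (T : Set (List (Fin d))) (hT : IsTree T)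
    (γ : ℝ) (hγ : HasExpandingNumber T γ) (hγ1 : 1 < γ) :
    ∃ 𝒯 : Set (List (Fin d) → Bool), IsTreeShift T 𝒯 ∧ 0 < treeEntropy T 𝒯 ∧
      ¬ ∃ S : Set (List (Fin d)), S ⊆ T ∧ IsIndepSet 𝒯 S ∧ HasPosDensity T S := by
  have hlev := hγ.level_nonempty hT (by linarith)
  obtain ⟨C, hC, hball⟩ := hγ.exists_ncard_ball_le_mul hT hγ1
  refine ⟨trueOnOneLevel T, isTreeShift_trueOnOneLevel hT.1, ?_, ?_⟩
  · calc 0 < Real.log (Nat.card Bool) / C := by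
          rw [Nat.card_eq_fintype_card, Fintype.card_bool]
          exact div_pos (Real.log_pos (by norm_num)) hC
      _ ≤ treeEntropy T (trueOnOneLevel T) :=
          le_treeEntropy_of_isIndepSet_level isIndepSet_level_trueOnOneLevel hlev hC hball
  · rintro ⟨S, hST, hS, hdens⟩
    exact hdens.infinite (tendsto_ncard_ball_atTop hlev) (hS.finite_of_trueOnOneLevel hST)
end

section
/- Let T be a tree, let 𝒯 ⊆ {0,1}^T be a tree-shift, let l ≥ 1, and suppose {S_n}_{n≥l} is a sequence of sets with S_n ⊆ Δ_n \ Δ_{n−l}, each S_n an independence set for 𝒯, such that limsup_{n→∞} |S_n ∩ Δ_n|/|Δ_n| = δ > 0. Then h(𝒯) ≥ δ·log 2 > 0. -/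
open Filter

/-- If `𝒯 ⊆ {0,1}^T` is a tree-shift, `l ≥ 1`, and `S_n ⊆ Δ_n \ Δ_{n−l}`
(for `n ≥ l`) are independence sets for `𝒯` with `limsup_n |S_n ∩ Δ_n|/|Δ_n| = δ > 0`,
then `h(𝒯) ≥ δ·log 2 > 0`. -/
theorem treeEntropy_ge_of_boundary_indep_sets
    (d : ℕ) (T : Set (List (Fin d))) (hT : IsTree T)
    (𝒯 : Set (List (Fin d) → Bool)) (h𝒯 : IsTreeShift T 𝒯)
    (l : ℕ) (hl : 1 ≤ l) (S : ℕ → Set (List (Fin d)))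
    (hSsub : ∀ n, l ≤ n → S n ⊆ ball T n \ ball T (n - l))
    (hSind : ∀ n, l ≤ n → IsIndepSet 𝒯 (S n))
    (δ : ℝ) (hδ : 0 < δ)
    (hlimsup :
      limsup (fun n : ℕ => ((S n ∩ ball T n).ncard : ℝ) / ((ball T n).ncard : ℝ)) atTop = δ) :
    δ * Real.log 2 ≤ treeEntropy T 𝒯 ∧ 0 < treeEntropy T 𝒯 := by
  classical
  have hballfin : ∀ n, (ball T n).Finite := fun n =>
    (List.finite_length_le (Fin d) n).subset fun w hw => hw.2
  have hballne : ∀ n, ([] : List (Fin d)) ∈ ball T n := fun n => ⟨hT.1, by simp⟩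
  have hballpos : ∀ n, 0 < ((ball T n).ncard : ℝ) := by
    intro n
    exact_mod_cast (Set.ncard_pos (hballfin n)).2 ⟨[], hballne n⟩
  set r : ℕ → ℝ := fun n => ((S n ∩ ball T n).ncard : ℝ) / ((ball T n).ncard : ℝ) with hr
  set g : ℕ → ℝ := fun n =>
    Real.log (ballBlockCount T 𝒯 n) / ((ball T n).ncard : ℝ) with hg
  have hr0 : ∀ n, 0 ≤ r n := fun n => by positivity
  have hr1 : ∀ n, r n ≤ 1 := by
    intro n
    rw [hr, div_le_one (hballpos n)]
    exact_mod_cast Set.ncard_le_ncard Set.inter_subset_right (hballfin n)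
  -- lower bound on the number of patterns
  have hcount : ∀ n, l ≤ n →
      (2 : ℕ) ^ (S n ∩ ball T n).ncard ≤ ballBlockCount T 𝒯 n := by
    intro n hn
    set K : Set (List (Fin d)) := S n ∩ ball T n with hK
    have hKfin : K.Finite := (hballfin n).subset Set.inter_subset_right
    haveI := hKfin.to_subtype
    haveI := (hballfin n).to_subtype
    set P := (fun t (w : ball T n) => t (w : List (Fin d))) '' 𝒯 with hP
    have key : ∀ u : K → Bool, ∃ p ∈ P, ∀ w : K, p ⟨(w : List (Fin d)), w.2.2⟩ = u w := by
      intro u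
      obtain ⟨t, ht𝒯, ht⟩ :=
        hSind n hn (fun w => if h : w ∈ K then u ⟨w, h⟩ else false)
      refine ⟨_, ⟨t, ht𝒯, rfl⟩, ?_⟩
      intro w
      have := ht (w : List (Fin d)) w.2.1
      simpa [dif_pos w.2] using this
    choose Φ hΦP hΦ using key
    have hinj : Function.Injective fun u => (⟨Φ u, hΦP u⟩ : P) := by
      intro u v huv
      funext w
      have h1 := hΦ u w
      have h2 := hΦ v w
      rw [← h1, ← h2]
      exact congrFun (congrArg Subtype.val huv) _
    haveI : Finite P := Set.toFinite P
    calc (2 : ℕ) ^ K.ncard = Nat.card (K → Bool) := by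
          rw [Nat.card_fun]
          simp [Nat.card_coe_set_eq]
      _ ≤ Nat.card P := Nat.card_le_card_of_injective _ hinj
      _ = ballBlockCount T 𝒯 n := (Nat.card_coe_set_eq P)
  -- upper bound on the number of patterns
  have hupper : ∀ n, ballBlockCount T 𝒯 n ≤ 2 ^ (ball T n).ncard := by
    intro n
    haveI := (hballfin n).to_subtype
    set P := (fun t (w : ball T n) => t (w : List (Fin d))) '' 𝒯 with hP
    calc ballBlockCount T 𝒯 n = Nat.card P := (Nat.card_coe_set_eq P).symm
      _ ≤ Nat.card ((ball T n) → Bool) :=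
          Nat.card_le_card_of_injective _ Subtype.val_injective
      _ = 2 ^ (ball T n).ncard := by
          rw [Nat.card_fun]
          simp [Nat.card_coe_set_eq]
  -- eventual lower bound on g
  have hfg : ∀ n, l ≤ n → r n * Real.log 2 ≤ g n := by
    intro n hn
    have h1 : ((S n ∩ ball T n).ncard : ℝ) * Real.log 2
        ≤ Real.log (ballBlockCount T 𝒯 n) := by
      have h2 : Real.log ((2 : ℝ) ^ (S n ∩ ball T n).ncard)
          ≤ Real.log (ballBlockCount T 𝒯 n) := by
        apply Real.log_le_log (by positivity)
        exact_mod_cast hcount n hn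
      rwa [Real.log_pow] at h2
    rw [hr, hg, div_mul_eq_mul_div, div_le_div_iff₀ (hballpos n) (hballpos n)]
    calc ((S n ∩ ball T n).ncard : ℝ) * Real.log 2 * ((ball T n).ncard : ℝ)
        ≤ Real.log (ballBlockCount T 𝒯 n) * ((ball T n).ncard : ℝ) := by
          apply mul_le_mul_of_nonneg_right h1 (le_of_lt (hballpos n))
      _ = Real.log (ballBlockCount T 𝒯 n) * ((ball T n).ncard : ℝ) := rfl
  -- uniform upper bound on g
  have hgle : ∀ n, g n ≤ Real.log 2 := by
    intro n
    have h1 : Real.log (ballBlockCount T 𝒯 n)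
        ≤ ((ball T n).ncard : ℝ) * Real.log 2 := by
      rcases Nat.eq_zero_or_pos (ballBlockCount T 𝒯 n) with h | h
      · rw [h]
        simp only [Nat.cast_zero, Real.log_zero]
        positivity
      · have h2 : Real.log (ballBlockCount T 𝒯 n)
            ≤ Real.log ((2 : ℝ) ^ (ball T n).ncard) := by
          apply Real.log_le_log (by exact_mod_cast h)
          exact_mod_cast hupper n
        rwa [Real.log_pow] at h2
    rw [hg, div_le_iff₀ (hballpos n)]
    calc Real.log (ballBlockCount T 𝒯 n) ≤ ((ball T n).ncard : ℝ) * Real.log 2 := h1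
      _ = Real.log 2 * ((ball T n).ncard : ℝ) := mul_comm _ _
  -- limsup computations
  have hlog2 : (0 : ℝ) < Real.log 2 := Real.log_pos (by norm_num)
  have hmono : Monotone (fun x : ℝ => x * Real.log 2) :=
    fun a b hab => mul_le_mul_of_nonneg_right hab hlog2.le
  have hrbdd : IsBoundedUnder (· ≤ ·) atTop r := isBoundedUnder_of ⟨1, hr1⟩
  have hrcobdd : IsCoboundedUnder (· ≤ ·) atTop r :=
    IsBoundedUnder.isCoboundedUnder_le (isBoundedUnder_of ⟨0, hr0⟩)
  have hlimf : limsup (fun n => r n * Real.log 2) atTop = δ * Real.log 2 := by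
    have := hmono.map_limsup_of_continuousAt r
      (continuous_mul_right (Real.log 2)).continuousAt hrbdd hrcobdd
    rw [hlimsup] at this
    exact this.symm
  have hcobf : IsCoboundedUnder (· ≤ ·) atTop (fun n => r n * Real.log 2) :=
    IsBoundedUnder.isCoboundedUnder_le
      (isBoundedUnder_of ⟨0, fun n => mul_nonneg (hr0 n) hlog2.le⟩)
  have hbddg : IsBoundedUnder (· ≤ ·) atTop g := isBoundedUnder_of ⟨Real.log 2, hgle⟩
  have hmain : δ * Real.log 2 ≤ treeEntropy T 𝒯 := by
    rw [← hlimf]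
    apply limsup_le_limsup _ hcobf hbddg
    filter_upwards [eventually_ge_atTop l] with n hn
    exact hfg n hn
  exact ⟨hmain, lt_of_lt_of_le (by positivity) hmain⟩
end
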